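/- arXiv:0910.0722 — 4 statements merged into one kernel-verified Lean document; each statement's English description precedes it below -/
import Mathlib

section
/- Under the compatibility condition with constant φ for the set S, the noiseless Lasso solution β* satisfies the ℓ₁-bound ‖β* − β⁰‖₁ ≤ 2λs/φ². -/
open Finset Matrix

/-- ℓ₁ norm of a vector. -/
noncomputable def l1 {p : ℕ} (v : Fin p → ℝ) : ℝ := ∑ j, |v j|

/-- Restriction of a vector to an index set (zero outside). -/
noncomputable def rV {p : ℕ} (S : Finset (Fin p)) (v : Fin p → ℝ) : Fin p → ℝ :=
  fun j => if j ∈ S then v j else 0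

/-- Quadratic form ‖f_β‖² = βᵀ Σ β. -/
noncomputable def quad {p : ℕ} (M : Matrix (Fin p) (Fin p) ℝ) (v : Fin p → ℝ) : ℝ :=
  v ⬝ᵥ M.mulVec v

/-!
Put `Δ = β* − β⁰`. Comparing the Lasso objective at `β*` with its value at `β⁰`, and using that
`β⁰` vanishes off `S`, gives the basic inequality `ΔᵀΣΔ + λ‖Δ_{Sᶜ}‖₁ ≤ λ‖Δ_S‖₁`. As `Σ ⪰ 0`,
`Δ` lies in the cone `‖Δ_{Sᶜ}‖₁ ≤ ‖Δ_S‖₁`, so compatibility yields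
`φ²‖Δ_S‖₁² ≤ s ΔᵀΣΔ ≤ λ s ‖Δ_S‖₁`, i.e. `‖Δ_S‖₁ ≤ λs/φ²`, and `‖Δ‖₁ ≤ 2‖Δ_S‖₁`.
-/

section Lasso

variable {p : ℕ}

lemma l1_nonneg (v : Fin p → ℝ) : 0 ≤ l1 v :=
  Finset.sum_nonneg fun j _ => abs_nonneg (v j)

lemma l1_rV (S : Finset (Fin p)) (v : Fin p → ℝ) : l1 (rV S v) = ∑ j ∈ S, |v j| := by
  simp only [l1, rV, apply_ite abs, abs_zero, Finset.sum_ite_mem, Finset.univ_inter]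

lemma l1_eq_l1_rV_add_l1_rV_compl (S : Finset (Fin p)) (v : Fin p → ℝ) :
    l1 v = l1 (rV S v) + l1 (rV Sᶜ v) := by
  rw [l1_rV, l1_rV, l1, Finset.sum_add_sum_compl]

lemma l1_eq_l1_rV_of_eq_zero_off {S : Finset (Fin p)} {v : Fin p → ℝ}
    (hv : ∀ j ∉ S, v j = 0) : l1 v = l1 (rV S v) := by
  congr 1
  funext j
  by_cases hj : j ∈ S <;> simp [rV, hj, hv]

/-- Decomposability of the ℓ₁ norm. -/
lemma l1_sub_l1_le_of_eq_zero_off {S : Finset (Fin p)} {β0 : Fin p → ℝ}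
    (hβ0 : ∀ j ∉ S, β0 j = 0) (β : Fin p → ℝ) :
    l1 β0 - l1 β ≤ l1 (rV S (β - β0)) - l1 (rV Sᶜ (β - β0)) := by
  have hoff : rV Sᶜ (β - β0) = rV Sᶜ β := by
    funext j
    by_cases hj : j ∈ S <;> simp [rV, hj, hβ0]
  have hon : l1 (rV S β0) - l1 (rV S β) ≤ l1 (rV S (β - β0)) := by
    simp only [l1_rV, ← Finset.sum_sub_distrib, Pi.sub_apply]
    exact Finset.sum_le_sum fun j _ => (abs_sub_abs_le_abs_sub _ _).trans_eq (abs_sub_comm _ _)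
  rw [hoff, l1_eq_l1_rV_of_eq_zero_off hβ0, l1_eq_l1_rV_add_l1_rV_compl S β]
  linarith

lemma quad_zero (M : Matrix (Fin p) (Fin p) ℝ) : quad M 0 = 0 := by
  simp [quad]

lemma quad_nonneg {M : Matrix (Fin p) (Fin p) ℝ} (hM : M.PosSemidef) (v : Fin p → ℝ) :
    0 ≤ quad M v :=
  hM.dotProduct_mulVec_nonneg v

lemma lasso_basic_inequality {M : Matrix (Fin p) (Fin p) ℝ} {S : Finset (Fin p)} {lam : ℝ}
    {β0 βstar : Fin p → ℝ} (hlam : 0 ≤ lam) (hβ0 : ∀ j ∉ S, β0 j = 0)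
    (hmin : quad M (βstar - β0) + lam * l1 βstar ≤ quad M (β0 - β0) + lam * l1 β0) :
    quad M (βstar - β0) + lam * l1 (rV Sᶜ (βstar - β0)) ≤
      lam * l1 (rV S (βstar - β0)) := by
  rw [sub_self, quad_zero, zero_add] at hmin
  have hdec := mul_le_mul_of_nonneg_left (l1_sub_l1_le_of_eq_zero_off hβ0 βstar) hlam
  linarith

end Lasso

lemma mul_le_of_mul_sq_le {a b c : ℝ} (ha : 0 ≤ a) (hb : 0 ≤ b) (h : c * a ^ 2 ≤ b * a) :
    c * a ≤ b := by
  rcases ha.eq_or_lt with rfl | ha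
  · simpa using hb
  · exact le_of_mul_le_mul_right (by nlinarith) ha

theorem stmt1_general {p s : ℕ}
    (M : Matrix (Fin p) (Fin p) ℝ) (hM : M.PosSemidef)
    (S : Finset (Fin p))
    (lam φ : ℝ) (hlam : 0 < lam) (hφ : 0 < φ)
    (β0 βstar : Fin p → ℝ) (hβ0 : ∀ j ∉ S, β0 j = 0)
    (hmin : ∀ β : Fin p → ℝ,
      quad M (βstar - β0) + lam * l1 βstar ≤ quad M (β - β0) + lam * l1 β)
    (hcompat : ∀ β : Fin p → ℝ, l1 (rV Sᶜ β) ≤ l1 (rV S β) →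
      φ ^ 2 * (l1 (rV S β)) ^ 2 ≤ (s : ℝ) * quad M β) :
    l1 (βstar - β0) ≤ 2 * lam * s / φ ^ 2 := by
  set Δ := βstar - β0
  have hbasic : quad M Δ + lam * l1 (rV Sᶜ Δ) ≤ lam * l1 (rV S Δ) :=
    lasso_basic_inequality hlam.le hβ0 (hmin β0)
  have hq := quad_nonneg hM Δ
  have hcone : l1 (rV Sᶜ Δ) ≤ l1 (rV S Δ) := le_of_mul_le_mul_left (by linarith) hlam
  have hS : φ ^ 2 * l1 (rV S Δ) ≤ lam * s := by
    refine mul_le_of_mul_sq_le (l1_nonneg _) (by positivity) ?_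
    calc φ ^ 2 * l1 (rV S Δ) ^ 2 ≤ s * quad M Δ := hcompat Δ hcone
      _ ≤ s * (lam * l1 (rV S Δ)) := by gcongr; linarith [mul_nonneg hlam.le (l1_nonneg (rV Sᶜ Δ))]
      _ = lam * s * l1 (rV S Δ) := by ring
  rw [l1_eq_l1_rV_add_l1_rV_compl S Δ, le_div_iff₀ (by positivity)]
  linarith [mul_le_mul_of_nonneg_left hcone (sq_nonneg φ)]

/-- ℓ₁-estimation bound for the noiseless Lasso under the compatibility condition. -/
theorem stmt1 {p s : ℕ} (hs : 1 ≤ s)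
    (M : Matrix (Fin p) (Fin p) ℝ) (hM : M.PosSemidef)
    (S : Finset (Fin p)) (hScard : S.card = s)
    (lam φ : ℝ) (hlam : 0 < lam) (hφ : 0 < φ)
    (β0 βstar : Fin p → ℝ) (hβ0 : ∀ j ∉ S, β0 j = 0)
    (hmin : ∀ β : Fin p → ℝ,
      quad M (βstar - β0) + lam * l1 βstar ≤ quad M (β - β0) + lam * l1 β)
    (hcompat : ∀ β : Fin p → ℝ, l1 (rV Sᶜ β) ≤ l1 (rV S β) →
      φ ^ 2 * (l1 (rV S β)) ^ 2 ≤ (s : ℝ) * quad M β) :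
    l1 (βstar - β0) ≤ 2 * lam * s / φ ^ 2 :=
  stmt1_general M hM S lam φ hlam hφ β0 βstar hβ0 hmin hcompat
end

section
/- Suppose the noiseless Lasso solution β* has active set S_* ⊇ S with Σ_{S_*,S_*} invertible. Then ‖Σ_{S_*^c,S_*} Σ_{S_*,S_*}^{-1} τ*_{S_*}‖_∞ ≤ 1, where τ*_{S_*} = sign(β*_{S_*}). Moreover ‖β*_{S_*} − β⁰_{S_*}‖₂ ≤ λ√|S_*| / (2 λ_min(Σ_{S_*,S_*})); hence if min_{j∈S}|β⁰_j| exceeds this bound, then sign(β*_{S_*}) is determined consistently with β⁰ on S. -/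
open Finset Matrix

/-- squared ℓ₂ norm of a vector. -/
noncomputable def l2sq {p : ℕ} (v : Fin p → ℝ) : ℝ := ∑ j, (v j) ^ 2

/-- Σ_{N,N}. -/
noncomputable def sub11 {p : ℕ} (M : Matrix (Fin p) (Fin p) ℝ) (N : Finset (Fin p)) :
    Matrix {x : Fin p // x ∈ N} {x : Fin p // x ∈ N} ℝ :=
  M.submatrix Subtype.val Subtype.val

/-- Σ_{N^c,N}. -/
noncomputable def sub21 {p : ℕ} (M : Matrix (Fin p) (Fin p) ℝ) (N : Finset (Fin p)) :
    Matrix {x : Fin p // x ∉ N} {x : Fin p // x ∈ N} ℝ :=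
  M.submatrix Subtype.val Subtype.val

/-- v_N as a vector indexed by N. -/
noncomputable def vecIn {p : ℕ} (N : Finset (Fin p)) (v : Fin p → ℝ) :
    {x : Fin p // x ∈ N} → ℝ := fun i => v i.val

/-! Since `d = β* − β⁰` vanishes off `S_*`, the KKT conditions read
`Σ_{·,S_*} d_{S_*} = −(λ/2) τ`, so `Σ_{S_*,S_*}⁻¹ τ_{S_*} = −(2/λ) d_{S_*}` and
`Σ_{S_*^c,S_*} Σ_{S_*,S_*}⁻¹ τ_{S_*} = τ_{S_*^c}`, bounded by `1`. Pairing the KKT conditions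
with `d` gives `Λ ‖d‖₂² ≤ dᵀΣd = −(λ/2) ⟨d, τ⟩ ≤ (λ/2) ‖d‖₁ ≤ (λ/2) √|S_*| ‖d‖₂`. Finally a
coordinate of `d` smaller than `|β⁰_j|` cannot flip the sign of `β⁰_j`. -/

theorem Matrix.submatrix_val_mulVec_of_support {m m' ι R : Type*} [Fintype ι]
    [NonUnitalNonAssocSemiring R]
    (M : Matrix m ι R) (f : m' → m) {N : Finset ι} {v : ι → R} (hv : ∀ i ∉ N, v i = 0) :
    (M.submatrix f ((↑) : N → ι)) *ᵥ (fun i : N => v i) = fun a => (M *ᵥ v) (f a) := by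
  ext a
  simp only [mulVec, dotProduct, submatrix_apply]
  rw [Finset.sum_coe_sort N (fun i => M (f a) i * v i)]
  exact Finset.sum_subset (Finset.subset_univ N) fun i _ hi => by rw [hv i hi, mul_zero]

theorem Matrix.inv_mulVec_eq_of_mulVec_eq_smul {n K : Type*} [Fintype n] [DecidableEq n]
    [Field K] {A : Matrix n n K} (hA : IsUnit A.det) {x t : n → K} {c : K} (hc : c ≠ 0)
    (h : A *ᵥ x = c • t) : A⁻¹ *ᵥ t = c⁻¹ • x := by
  rw [← inv_smul_smul₀ hc t, ← h, mulVec_smul, mulVec_mulVec, nonsing_inv_mul _ hA, one_mulVec]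

theorem Real.sign_eq_of_abs_sub_lt {a b : ℝ} (h : |b - a| < |a|) : Real.sign b = Real.sign a := by
  obtain ⟨hlo, hhi⟩ := abs_lt.1 h
  rcases lt_trichotomy a 0 with ha | ha | ha
  · rw [abs_of_neg ha] at hhi
    rw [Real.sign_of_neg (by linarith), Real.sign_of_neg ha]
  · simp only [ha, abs_zero] at h
    exact absurd h (abs_nonneg _).not_gt
  · rw [abs_of_pos ha] at hlo
    rw [Real.sign_of_pos (by linarith), Real.sign_of_pos ha]

section LassoBounds

variable {p : ℕ}

theorem rV_eq_self {N : Finset (Fin p)} {v : Fin p → ℝ} (hv : ∀ j ∉ N, v j = 0) : rV N v = v := by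
  ext j
  by_cases hj : j ∈ N <;> simp [rV, hj, hv]

theorem abs_le_sqrt_l2sq (v : Fin p → ℝ) (j : Fin p) : |v j| ≤ Real.sqrt (l2sq v) :=
  Real.abs_le_sqrt (Finset.single_le_sum (fun i _ => sq_nonneg (v i)) (Finset.mem_univ j))

theorem sum_abs_le_sqrt_card_mul_sqrt_l2sq {N : Finset (Fin p)} {v : Fin p → ℝ}
    (hv : ∀ j ∉ N, v j = 0) : ∑ j, |v j| ≤ Real.sqrt #N * Real.sqrt (l2sq v) := by
  have hsum : ∑ j, |v j| = ∑ j ∈ N, |v j| :=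
    (Finset.sum_subset (Finset.subset_univ N) fun j _ hj => by rw [hv j hj, abs_zero]).symm
  have hl2 : l2sq v = ∑ j ∈ N, |v j| ^ 2 := by
    rw [l2sq, ← Finset.sum_subset (Finset.subset_univ N) fun j _ hj => by rw [hv j hj]; ring]
    simp only [sq_abs]
  rw [hsum, hl2, ← Real.sqrt_mul (Nat.cast_nonneg _)]
  exact Real.le_sqrt_of_sq_le sq_sum_le_card_mul_sum_sq

theorem quad_le_of_mulVec_eq_smul {M : Matrix (Fin p) (Fin p) ℝ} {lam : ℝ} (hlam : 0 ≤ lam)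
    {d τ : Fin p → ℝ} (hMd : M *ᵥ d = -(lam / 2) • τ) (hτ : ∀ j, |τ j| ≤ 1) :
    quad M d ≤ lam / 2 * ∑ j, |d j| := by
  rw [quad, hMd, dotProduct_smul, smul_eq_mul, neg_mul]
  calc
    -(lam / 2 * d ⬝ᵥ τ) ≤ lam / 2 * |d ⬝ᵥ τ| := by
      rw [← mul_neg]; exact mul_le_mul_of_nonneg_left (neg_le_abs _) (by linarith)
    _ ≤ lam / 2 * ∑ j, |d j| := by
      gcongr
      refine (Finset.abs_sum_le_sum_abs _ _).trans (Finset.sum_le_sum fun j _ => ?_)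
      rw [abs_mul]
      exact mul_le_of_le_one_right (abs_nonneg _) (hτ j)

theorem sqrt_l2sq_le_of_mulVec_eq_smul {M : Matrix (Fin p) (Fin p) ℝ} {N : Finset (Fin p)}
    {lam Λ : ℝ} (hlam : 0 ≤ lam) (hΛ : 0 < Λ) {d τ : Fin p → ℝ} (hd : ∀ j ∉ N, d j = 0)
    (hMd : M *ᵥ d = -(lam / 2) • τ) (hτ : ∀ j, |τ j| ≤ 1) (heig : Λ * l2sq d ≤ quad M d) :
    Real.sqrt (l2sq d) ≤ lam * Real.sqrt #N / (2 * Λ) := by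
  set T := Real.sqrt (l2sq d)
  have hT : T ^ 2 = l2sq d := Real.sq_sqrt (Finset.sum_nonneg fun j _ => sq_nonneg (d j))
  have key : Λ * T ^ 2 ≤ lam / 2 * Real.sqrt #N * T :=
    calc
      Λ * T ^ 2 ≤ quad M d := hT ▸ heig
      _ ≤ lam / 2 * ∑ j, |d j| := quad_le_of_mulVec_eq_smul hlam hMd hτ
      _ ≤ lam / 2 * (Real.sqrt #N * T) := by gcongr; exact sum_abs_le_sqrt_card_mul_sqrt_l2sq hd
      _ = lam / 2 * Real.sqrt #N * T := by ring
  rw [le_div_iff₀ (by positivity)]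
  rcases (Real.sqrt_nonneg _ : 0 ≤ T).eq_or_lt with hT0 | hT0
  · rw [show T = 0 from hT0.symm, zero_mul]; positivity
  · nlinarith

end LassoBounds

theorem stmt10_general {p : ℕ} (M : Matrix (Fin p) (Fin p) ℝ)
    (S Sstar : Finset (Fin p)) (hSsub : S ⊆ Sstar)
    (lam Λsq : ℝ) (hlam : 0 < lam) (hΛ : 0 < Λsq)
    (β0 βstar τ : Fin p → ℝ) (hβ0 : ∀ j ∉ S, β0 j = 0)
    -- S_* is the active set of β*
    (hSstar : ∀ j, j ∈ Sstar ↔ βstar j ≠ 0)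
    -- KKT conditions for the noiseless Lasso
    (hkkt : ∀ j, 2 * M.mulVec (βstar - β0) j = -(lam * τ j))
    (hτ1 : ∀ j, |τ j| ≤ 1)
    -- Σ_{S_*,S_*} is invertible, with smallest eigenvalue ≥ Λsq
    (hA : IsUnit (sub11 M Sstar).det)
    (heig : ∀ v : Fin p → ℝ, (∀ j ∉ Sstar, v j = 0) → Λsq * l2sq v ≤ quad M v) :
    (∀ j : {x : Fin p // x ∉ Sstar},
        |(sub21 M Sstar).mulVec ((sub11 M Sstar)⁻¹.mulVec (vecIn Sstar τ)) j| ≤ 1) ∧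
    Real.sqrt (l2sq (rV Sstar (βstar - β0))) ≤
        lam * Real.sqrt Sstar.card / (2 * Λsq) ∧
    ((∀ j ∈ S, lam * Real.sqrt Sstar.card / (2 * Λsq) < |β0 j|) →
        ∀ j ∈ S, Real.sign (βstar j) = Real.sign (β0 j)) := by
  set d := βstar - β0
  have hd : ∀ j ∉ Sstar, d j = 0 := fun j hj => by
    simp [d, not_not.1 (mt (hSstar j).2 hj), hβ0 j (mt (@hSsub j) hj)]
  have hMd : M *ᵥ d = -(lam / 2) • τ := funext fun j => by
    simp only [Pi.smul_apply, smul_eq_mul]; linarith [hkkt j]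
  have hMsub {m : Type} (f : m → Fin p) :
      M.submatrix f (↑) *ᵥ vecIn Sstar d = fun a => (M *ᵥ d) (f a) :=
    submatrix_val_mulVec_of_support M f hd
  have hinv : (sub11 M Sstar)⁻¹ *ᵥ vecIn Sstar τ = (-(lam / 2))⁻¹ • vecIn Sstar d :=
    inv_mulVec_eq_of_mulVec_eq_smul hA (by linarith) (by rw [sub11, hMsub, hMd]; rfl)
  have hbound := sqrt_l2sq_le_of_mulVec_eq_smul hlam.le hΛ hd hMd hτ1 (heig d hd)
  refine ⟨fun j => ?_, by rwa [rV_eq_self hd], fun hmin j hj => ?_⟩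
  · rw [hinv, mulVec_smul, sub21, hMsub, hMd, Pi.smul_apply,
      Pi.smul_apply, smul_smul, inv_mul_cancel₀ (by linarith), one_smul]
    exact hτ1 j
  · exact Real.sign_eq_of_abs_sub_lt
      ((abs_le_sqrt_l2sq d j).trans_lt (hbound.trans_lt (hmin j hj)))

/-- If the Lasso active set S_* contains S and Σ_{S_*,S_*} is invertible, then
‖Σ_{S_*^c,S_*} Σ_{S_*,S_*}^{-1} τ*_{S_*}‖_∞ ≤ 1, and
‖β*_{S_*} − β⁰_{S_*}‖₂ ≤ λ√|S_*|/(2 λ_min(Σ_{S_*,S_*})); if moreover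
min_{j∈S}|β⁰_j| exceeds this bound, the signs of β* agree with those of β⁰ on S. -/
theorem stmt10 {p : ℕ} (M : Matrix (Fin p) (Fin p) ℝ) (hM : M.PosSemidef)
    (S Sstar : Finset (Fin p)) (hSsub : S ⊆ Sstar)
    (lam Λsq : ℝ) (hlam : 0 < lam) (hΛ : 0 < Λsq)
    (β0 βstar τ : Fin p → ℝ) (hβ0 : ∀ j ∉ S, β0 j = 0)
    -- S_* is the active set of β*
    (hSstar : ∀ j, j ∈ Sstar ↔ βstar j ≠ 0)
    -- KKT conditions for the noiseless Lasso
    (hkkt : ∀ j, 2 * M.mulVec (βstar - β0) j = -(lam * τ j))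
    (hτ1 : ∀ j, |τ j| ≤ 1)
    (hτsign : ∀ j, βstar j ≠ 0 → τ j = Real.sign (βstar j))
    -- Σ_{S_*,S_*} is invertible, with smallest eigenvalue ≥ Λsq
    (hA : IsUnit (sub11 M Sstar).det)
    (heig : ∀ v : Fin p → ℝ, (∀ j ∉ Sstar, v j = 0) → Λsq * l2sq v ≤ quad M v) :
    (∀ j : {x : Fin p // x ∉ Sstar},
        |(sub21 M Sstar).mulVec ((sub11 M Sstar)⁻¹.mulVec (vecIn Sstar τ)) j| ≤ 1) ∧
    Real.sqrt (l2sq (rV Sstar (βstar - β0))) ≤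
        lam * Real.sqrt Sstar.card / (2 * Λsq) ∧
    ((∀ j ∈ S, lam * Real.sqrt Sstar.card / (2 * Λsq) < |β0 j|) →
        ∀ j ∈ S, Real.sign (βstar j) = Real.sign (β0 j)) :=
  stmt10_general M S Sstar hSsub lam Λsq hlam hΛ β0 βstar τ hβ0 hSstar hkkt hτ1 hA heig
end

section
/- Suppose the uniform irrepresentable constant ϑ = max_{‖τ_S‖_∞≤1} ‖Σ_{S^c,S}Σ_{S,S}^{-1}τ_S‖_∞ < 1/L for some L ≥ 1, and Λ²(S,s) = λ_min(Σ_{S,S}) > 0. Then the compatibility constant satisfies φ²_compatible(L,S) ≥ (1 − Lϑ)² Λ²(S,s), where φ²_compatible(L,S) = min{ s·βᵀΣβ / ‖β_S‖₁² : ‖β_{S^c}‖₁ ≤ L‖β_S‖₁, β_S ≠ 0 }. In particular, the uniform (L,S,s)-irrepresentable condition implies the (L,S)-compatibility condition. -/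
open Finset Matrix

/-!
Let `b` be supported on `S` with `(Σ b)_S = sign β_S`. The irrepresentable bound gives
`βᵀ Σ b ≥ ‖β_S‖₁ - ϑ ‖β_{Sᶜ}‖₁ ≥ (1 - L ϑ) ‖β_S‖₁`, and Cauchy–Schwarz for the semidefinite form
gives `(βᵀ Σ b)² ≤ βᵀ Σ β · bᵀ Σ b`. Finally `bᵀ Σ b = sign(β_S)ᵀ b_S ≤ ‖b_S‖₁ ≤ √s ‖b‖₂`, and
`Λ² ‖b‖₂² ≤ bᵀ Σ b`, so `Λ² · bᵀ Σ b ≤ s`.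
-/

namespace Matrix

variable {ι : Type*} [Fintype ι]

lemma PosSemidef.dotProduct_mulVec_sq_le {M : Matrix ι ι ℝ} (hM : M.PosSemidef) (x y : ι → ℝ) :
    (x ⬝ᵥ M *ᵥ y) ^ 2 ≤ (x ⬝ᵥ M *ᵥ x) * (y ⬝ᵥ M *ᵥ y) := by
  classical
  have hMt : Mᵀ = M := isHermitian_iff_isSymm.mp hM.isHermitian
  have hsymm : LinearMap.IsSymm (toBilin' M) := LinearMap.isSymm_def.mpr fun u v => by
    rw [RingHom.id_apply, toBilin'_apply', toBilin'_apply', dotProduct_mulVec,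
      ← mulVec_transpose, hMt, dotProduct_comm]
  simpa only [toBilin'_apply'] using
    LinearMap.BilinForm.apply_sq_le_of_symm (toBilin' M)
      (fun v => by simpa [toBilin'_apply'] using hM.dotProduct_mulVec_nonneg v) hsymm x y

lemma exists_supported_mulVec_eq_on {M : Matrix ι ι ℝ} {S : Finset ι}
    (hpos : ∀ v : ι → ℝ, (∀ j ∉ S, v j = 0) → v ≠ 0 → 0 < v ⬝ᵥ M *ᵥ v) (τ : ι → ℝ) :
    ∃ b : ι → ℝ, (∀ j ∉ S, b j = 0) ∧ ∀ j ∈ S, (M *ᵥ b) j = τ j := by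
  let ext := Function.ExtendByZero.linearMap ℝ ((↑) : S → ι)
  let A := (LinearMap.funLeft ℝ ℝ ((↑) : S → ι)).comp (M.mulVecLin.comp ext)
  have ext_supp (w : S → ℝ) : ∀ j ∉ S, ext w j = 0 := fun j hj =>
    Function.extend_apply' _ _ _ (by rintro ⟨i, rfl⟩; exact hj i.2)
  have hA : Function.Injective A := by
    refine (injective_iff_map_eq_zero A).2 fun w hw => ?_
    have hMw : ∀ j ∈ S, (M *ᵥ ext w) j = 0 := fun j hj => congrFun hw ⟨j, hj⟩
    have hq : ext w ⬝ᵥ M *ᵥ ext w = 0 := by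
      refine Finset.sum_eq_zero fun j _ => ?_
      by_cases hj : j ∈ S
      · simp [hMw j hj]
      · simp [ext_supp w j hj]
    by_contra hw0
    have hext0 : ext w ≠ 0 := fun h => hw0 (funext fun i => by
      simpa [ext, Subtype.val_injective.extend_apply] using congrFun h i)
    exact (hpos _ (ext_supp w) hext0).ne' hq
  obtain ⟨w, hw⟩ := LinearMap.injective_iff_surjective.mp hA (fun i => τ i)
  exact ⟨ext w, ext_supp w, fun j hj => congrFun hw ⟨j, hj⟩⟩

end Matrix

section

variable {p : ℕ}

lemma l2sq_eq_sum_of_support {S : Finset (Fin p)} {v : Fin p → ℝ} (hv : ∀ j ∉ S, v j = 0) :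
    l2sq v = ∑ j ∈ S, v j ^ 2 :=
  (Finset.sum_subset (Finset.subset_univ S) fun j _ hj => by simp [hv j hj]).symm

lemma l2sq_pos {v : Fin p → ℝ} (hv : v ≠ 0) : 0 < l2sq v := by
  obtain ⟨j, hj⟩ := Function.ne_iff.mp hv
  exact Finset.sum_pos' (fun i _ => sq_nonneg (v i)) ⟨j, Finset.mem_univ j, sq_pos_iff.mpr hj⟩

lemma l1_sub_mul_l1_le_dotProduct {S : Finset (Fin p)} {β g : Fin p → ℝ} {ϑ : ℝ}
    (hS : ∀ j ∈ S, g j = SignType.sign (β j)) (hSc : ∀ j ∉ S, |g j| ≤ ϑ) :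
    l1 (rV S β) - ϑ * l1 (rV Sᶜ β) ≤ β ⬝ᵥ g := by
  have hSsum : ∑ j ∈ S, β j * g j = ∑ j ∈ S, |β j| :=
    Finset.sum_congr rfl fun j hj => by rw [hS j hj, self_mul_sign]
  have hScsum : -(ϑ * ∑ j ∈ Sᶜ, |β j|) ≤ ∑ j ∈ Sᶜ, β j * g j := by
    rw [Finset.mul_sum, ← Finset.sum_neg_distrib]
    refine Finset.sum_le_sum fun j hj => ?_
    have hle : |β j * g j| ≤ ϑ * |β j| := by
      rw [abs_mul, mul_comm]
      exact mul_le_mul_of_nonneg_right (hSc j (Finset.mem_compl.mp hj)) (abs_nonneg _)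
    linarith [neg_abs_le (β j * g j)]
  rw [l1_rV, l1_rV, dotProduct, ← Finset.sum_add_sum_compl S, hSsum]
  linarith

lemma mul_quad_le_card {M : Matrix (Fin p) (Fin p) ℝ} {S : Finset (Fin p)} {Λ : ℝ} (hΛ : 0 ≤ Λ)
    {b : Fin p → ℝ} (hb : ∀ j ∉ S, b j = 0) (heig : Λ * l2sq b ≤ quad M b)
    (hMb : ∀ j ∈ S, |(M *ᵥ b) j| ≤ 1) :
    Λ * quad M b ≤ S.card := by
  have hq_le : quad M b ≤ ∑ j ∈ S, |b j| := by
    rw [quad, dotProduct, ← Finset.sum_subset (Finset.subset_univ S) fun j _ hj => by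
      simp [hb j hj]]
    refine Finset.sum_le_sum fun j hj => ?_
    calc b j * (M *ᵥ b) j ≤ |b j| * |(M *ᵥ b) j| := (le_abs_self _).trans (abs_mul _ _).le
      _ ≤ |b j| := mul_le_of_le_one_right (abs_nonneg _) (hMb j hj)
  have hq_nonneg : 0 ≤ quad M b :=
    (mul_nonneg hΛ (Finset.sum_nonneg fun j _ => sq_nonneg (b j))).trans heig
  have hsq : (∑ j ∈ S, |b j|) ^ 2 ≤ S.card * l2sq b := by
    simpa [l2sq_eq_sum_of_support hb] using sq_sum_le_card_mul_sum_sq (s := S) (f := fun j => |b j|)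
  have key : quad M b * (Λ * quad M b) ≤ quad M b * S.card := by
    calc quad M b * (Λ * quad M b) ≤ Λ * (∑ j ∈ S, |b j|) ^ 2 := by
          rw [← mul_assoc, mul_comm _ Λ, mul_assoc, ← sq]
          exact mul_le_mul_of_nonneg_left (pow_le_pow_left₀ hq_nonneg hq_le 2) hΛ
      _ ≤ Λ * (S.card * l2sq b) := mul_le_mul_of_nonneg_left hsq hΛ
      _ = S.card * (Λ * l2sq b) := by ring
      _ ≤ S.card * quad M b := mul_le_mul_of_nonneg_left heig (Nat.cast_nonneg _)
      _ = quad M b * S.card := mul_comm _ _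
  rcases hq_nonneg.eq_or_lt with hq | hq
  · rw [← hq, mul_zero]; exact Nat.cast_nonneg _
  · exact le_of_mul_le_mul_left key hq

end

theorem stmt14_general {p s : ℕ}
    (M : Matrix (Fin p) (Fin p) ℝ) (hM : M.PosSemidef)
    (S : Finset (Fin p)) (hScard : S.card = s)
    (L ϑ Λsq : ℝ) (hϑ0 : 0 ≤ ϑ) (hϑ : L * ϑ < 1) (hΛ : 0 < Λsq)
    -- Λsq = λ_min(Σ_{S,S}) (as a lower bound)
    (heig : ∀ v : Fin p → ℝ, (∀ j ∉ S, v j = 0) → Λsq * l2sq v ≤ quad M v)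
    -- uniform irrepresentable constant bound: for all ‖τ_S‖_∞ ≤ 1 and b
    -- supported on S with (Σ b)_S = τ_S (i.e. b_S = Σ_{S,S}^{-1}τ_S), the
    -- sup-norm of Σ_{S^c,S} Σ_{S,S}^{-1} τ_S = (Σ b)_{S^c} is at most ϑ
    (hirr : ∀ τ : Fin p → ℝ, (∀ j ∈ S, |τ j| ≤ 1) →
      ∀ b : Fin p → ℝ, (∀ j ∉ S, b j = 0) → (∀ j ∈ S, M.mulVec b j = τ j) →
      ∀ j ∉ S, |M.mulVec b j| ≤ ϑ) :
    -- compatibility: φ²_compatible(L,S) ≥ (1 − Lϑ)² Λsq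
    ∀ β : Fin p → ℝ, l1 (rV Sᶜ β) ≤ L * l1 (rV S β) →
      (1 - L * ϑ) ^ 2 * Λsq * (l1 (rV S β)) ^ 2 ≤ (s : ℝ) * quad M β := by
  intro β hβ
  let τ : Fin p → ℝ := fun j => SignType.sign (β j)
  have hτ : ∀ j, |τ j| ≤ 1 := fun j => by
    rcases lt_trichotomy (β j) 0 with h | h | h <;> simp [τ, h]
  obtain ⟨b, hb, hMb⟩ := exists_supported_mulVec_eq_on
    (fun v hv hv0 => (mul_pos hΛ (l2sq_pos hv0)).trans_le (heig v hv)) τ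
  have hD : (1 - L * ϑ) * l1 (rV S β) ≤ β ⬝ᵥ M *ᵥ b := by
    have := l1_sub_mul_l1_le_dotProduct hMb (hirr τ (fun j _ => hτ j) b hb hMb)
    linarith [mul_le_mul_of_nonneg_left hβ hϑ0]
  have hqb : Λsq * quad M b ≤ s :=
    hScard ▸ mul_quad_le_card hΛ.le hb (heig b hb) fun j hj => hMb j hj ▸ hτ j
  have hA : 0 ≤ (1 - L * ϑ) * l1 (rV S β) :=
    mul_nonneg (by linarith) (Finset.sum_nonneg fun j _ => abs_nonneg _)
  calc (1 - L * ϑ) ^ 2 * Λsq * l1 (rV S β) ^ 2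
      = Λsq * ((1 - L * ϑ) * l1 (rV S β)) ^ 2 := by ring
    _ ≤ Λsq * (quad M β * quad M b) := mul_le_mul_of_nonneg_left
        ((pow_le_pow_left₀ hA hD 2).trans (hM.dotProduct_mulVec_sq_le β b)) hΛ.le
    _ = quad M β * (Λsq * quad M b) := by ring
    _ ≤ quad M β * s :=
        mul_le_mul_of_nonneg_left hqb (by simpa [quad] using hM.dotProduct_mulVec_nonneg β)
    _ = s * quad M β := mul_comm _ _

/-- The uniform (L,S,s)-irrepresentable condition implies the (L,S)-compatibility
condition: φ²_compatible(L,S) ≥ (1 − Lϑ)² Λ²(S,s). -/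
theorem stmt14 {p s : ℕ} (hs : 1 ≤ s)
    (M : Matrix (Fin p) (Fin p) ℝ) (hM : M.PosSemidef)
    (S : Finset (Fin p)) (hScard : S.card = s)
    (L ϑ Λsq : ℝ) (hL : 1 ≤ L) (hϑ0 : 0 ≤ ϑ) (hϑ : L * ϑ < 1) (hΛ : 0 < Λsq)
    -- Λsq = λ_min(Σ_{S,S}) (as a lower bound)
    (heig : ∀ v : Fin p → ℝ, (∀ j ∉ S, v j = 0) → Λsq * l2sq v ≤ quad M v)
    -- uniform irrepresentable constant bound: for all ‖τ_S‖_∞ ≤ 1 and b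
    -- supported on S with (Σ b)_S = τ_S (i.e. b_S = Σ_{S,S}^{-1}τ_S), the
    -- sup-norm of Σ_{S^c,S} Σ_{S,S}^{-1} τ_S = (Σ b)_{S^c} is at most ϑ
    (hirr : ∀ τ : Fin p → ℝ, (∀ j ∈ S, |τ j| ≤ 1) →
      ∀ b : Fin p → ℝ, (∀ j ∉ S, b j = 0) → (∀ j ∈ S, M.mulVec b j = τ j) →
      ∀ j ∉ S, |M.mulVec b j| ≤ ϑ) :
    -- compatibility: φ²_compatible(L,S) ≥ (1 − Lϑ)² Λsq
    ∀ β : Fin p → ℝ, l1 (rV Sᶜ β) ≤ L * l1 (rV S β) →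
      (1 - L * ϑ) ^ 2 * Λsq * (l1 (rV S β)) ^ 2 ≤ (s : ℝ) * quad M β :=
  stmt14_general M hM S hScard L ϑ Λsq hϑ0 hϑ hΛ heig hirr
end

section
/- Let Σ₀, Σ₁ be p×p positive semidefinite with supremum entry-wise distance d_∞(Σ₀,Σ₁). Then φ_compatible(Σ₁, L, S) ≥ φ_compatible(Σ₀, L, S) − (L+1)√(d_∞(Σ₀,Σ₁)·s). -/
open Finset Matrix

/-!
Perturbing `Σ₀` entrywise by at most `d` changes the quadratic form by at most `d ‖β‖₁²`, and
on the cone `‖β_{Sᶜ}‖₁ ≤ L ‖β_S‖₁` one has `‖β‖₁ ≤ (L + 1) ‖β_S‖₁`. Taking square roots,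
`√(βᵀΣ₀β) ≤ √(βᵀΣ₁β) + (L + 1) √d ‖β_S‖₁`, which after multiplying by `√s` is the claim.
-/

variable {p : ℕ}

lemma l1_le_of_mem_cone {S : Finset (Fin p)} {L : ℝ} {v : Fin p → ℝ}
    (hv : l1 (rV Sᶜ v) ≤ L * l1 (rV S v)) : l1 v ≤ (L + 1) * l1 (rV S v) := by
  rw [l1_eq_l1_rV_add_l1_rV_compl S v]
  linarith

lemma quad_sub (M N : Matrix (Fin p) (Fin p) ℝ) (v : Fin p → ℝ) :
    quad M v - quad N v = quad (M - N) v := by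
  simp only [quad, sub_mulVec, dotProduct_sub]

lemma abs_quad_le {M : Matrix (Fin p) (Fin p) ℝ} {d : ℝ} (hM : ∀ j k, |M j k| ≤ d)
    (v : Fin p → ℝ) : |quad M v| ≤ d * l1 v ^ 2 := by
  calc |quad M v| = |∑ j, ∑ k, v j * M j k * v k| := by
        simp only [quad, dotProduct, mulVec, mul_sum, mul_assoc]
    _ ≤ ∑ j, ∑ k, |v j * M j k * v k| :=
        (abs_sum_le_sum_abs _ _).trans (sum_le_sum fun j _ => abs_sum_le_sum_abs _ _)
    _ ≤ ∑ j, ∑ k, d * (|v j| * |v k|) := by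
        gcongr with j _ k _
        rw [abs_mul, abs_mul, mul_right_comm, mul_comm d]
        exact mul_le_mul_of_nonneg_left (hM j k) (by positivity)
    _ = d * l1 v ^ 2 := by
        simp only [l1, sq, sum_mul, mul_sum]
        exact sum_congr rfl fun j _ => sum_congr rfl fun k _ => by ring

lemma quad_le_quad_add {M N : Matrix (Fin p) (Fin p) ℝ} {d : ℝ}
    (hMN : ∀ j k, |M j k - N j k| ≤ d) (v : Fin p → ℝ) :
    quad M v ≤ quad N v + d * l1 v ^ 2 := by
  have h := abs_quad_le (M := M - N) hMN v
  rw [← quad_sub] at h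
  linarith [le_abs_self (quad M v - quad N v)]

lemma sqrt_quad_le_sqrt_quad_add {M N : Matrix (Fin p) (Fin p) ℝ} (hN : N.PosSemidef)
    {d : ℝ} (hd0 : 0 ≤ d) (hMN : ∀ j k, |M j k - N j k| ≤ d) (v : Fin p → ℝ) :
    √(quad M v) ≤ √(quad N v) + √d * l1 v := by
  have hN0 : 0 ≤ quad N v := hN.dotProduct_mulVec_nonneg v
  have hc : 0 ≤ √d * l1 v := mul_nonneg (Real.sqrt_nonneg d) (l1_nonneg v)
  rw [Real.sqrt_le_left (add_nonneg (Real.sqrt_nonneg _) hc)]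
  calc quad M v ≤ quad N v + d * l1 v ^ 2 := quad_le_quad_add hMN v
    _ ≤ (√(quad N v) + √d * l1 v) ^ 2 := by
        nlinarith [Real.sq_sqrt hN0, Real.sq_sqrt hd0, Real.sqrt_nonneg (quad N v)]

theorem stmt16_general {p s : ℕ}
    (M0 M1 : Matrix (Fin p) (Fin p) ℝ)
    (hM1 : M1.PosSemidef)
    (S : Finset (Fin p))
    (L d φ0 : ℝ) (hd0 : 0 ≤ d)
    -- d_∞(Σ₀, Σ₁) ≤ d
    (hd : ∀ j k, |M0 j k - M1 j k| ≤ d)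
    -- φ₀ is a (Σ₀,L,S)-compatibility constant:
    -- φ₀·‖β_S‖₁ ≤ √s·‖f_β‖_{Σ₀} on the cone
    (hcompat : ∀ β : Fin p → ℝ, l1 (rV Sᶜ β) ≤ L * l1 (rV S β) →
      φ0 * l1 (rV S β) ≤ Real.sqrt s * Real.sqrt (quad M0 β)) :
    -- then φ₀ − (L+1)√(d·s) is a (Σ₁,L,S)-compatibility constant
    ∀ β : Fin p → ℝ, l1 (rV Sᶜ β) ≤ L * l1 (rV S β) →
      (φ0 - (L + 1) * Real.sqrt (d * s)) * l1 (rV S β) ≤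
        Real.sqrt s * Real.sqrt (quad M1 β) := by
  intro β hcone
  have hsqrt : √(quad M0 β) ≤ √(quad M1 β) + √d * ((L + 1) * l1 (rV S β)) :=
    (sqrt_quad_le_sqrt_quad_add hM1 hd0 hd β).trans <| by
      gcongr
      exact l1_le_of_mem_cone hcone
  calc (φ0 - (L + 1) * √(d * s)) * l1 (rV S β)
      = φ0 * l1 (rV S β) - √s * (√d * ((L + 1) * l1 (rV S β))) := by
        rw [Real.sqrt_mul hd0]; ring
    _ ≤ √s * √(quad M0 β) - √s * (√d * ((L + 1) * l1 (rV S β))) := by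
        gcongr ?_ - _
        exact hcompat β hcone
    _ ≤ √s * √(quad M1 β) := by
        rw [sub_le_iff_le_add, ← mul_add]
        exact mul_le_mul_of_nonneg_left hsqrt (Real.sqrt_nonneg _)

/-- Compatibility constants under entrywise matrix approximation:
φ_compatible(Σ₁,L,S) ≥ φ_compatible(Σ₀,L,S) − (L+1)√(d_∞(Σ₀,Σ₁)·s). -/
theorem stmt16 {p s : ℕ}
    (M0 M1 : Matrix (Fin p) (Fin p) ℝ)
    (hM0 : M0.PosSemidef) (hM1 : M1.PosSemidef)
    (S : Finset (Fin p)) (hScard : S.card = s)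
    (L d φ0 : ℝ) (hL : 0 < L) (hd0 : 0 ≤ d) (hφ0 : 0 ≤ φ0)
    -- d_∞(Σ₀, Σ₁) ≤ d
    (hd : ∀ j k, |M0 j k - M1 j k| ≤ d)
    -- φ₀ is a (Σ₀,L,S)-compatibility constant:
    -- φ₀·‖β_S‖₁ ≤ √s·‖f_β‖_{Σ₀} on the cone
    (hcompat : ∀ β : Fin p → ℝ, l1 (rV Sᶜ β) ≤ L * l1 (rV S β) →
      φ0 * l1 (rV S β) ≤ Real.sqrt s * Real.sqrt (quad M0 β)) :
    -- then φ₀ − (L+1)√(d·s) is a (Σ₁,L,S)-compatibility constant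
    ∀ β : Fin p → ℝ, l1 (rV Sᶜ β) ≤ L * l1 (rV S β) →
      (φ0 - (L + 1) * Real.sqrt (d * s)) * l1 (rV S β) ≤
        Real.sqrt s * Real.sqrt (quad M1 β) :=
  stmt16_general M0 M1 hM1 S L d φ0 hd0 hd hcompat
end
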